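/- Let r, r' be rigid resource expressions with r ¨ r' (coherent), and b⃗, b⃗' rigid monomials with |b⃗| = n_x(r) and |b⃗'| = n_x(r'). If r[b⃗/x] ≅ r'[b⃗'/x] then r ≅ r' and b⃗ ≅ b⃗'. -/

import Mathlib

set_option maxHeartbeats 1000000

/-! ### Rigid resource terms -/

/-- Rigid resource terms (de Bruijn indices for variables):
`a ::= x | λ.a | ⟨a⟩b⃗ | a⊕• | •⊕a` where argument lists are ordered. -/
inductive Rt : Type
  | var : ℕ → Rt
  | lam : Rt → Rt
  | app : Rt → List Rt → Rt
  | inl : Rt → Rt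
  | inr : Rt → Rt
deriving Inhabited

/-- Rigid resource expressions: terms or (rigid) monomials. -/
abbrev REx : Type := Rt ⊕ List Rt

/-! ### Isomorphism of rigid expressions -/

mutual
  /-- Two rigid terms are isomorphic (`≅`) when they differ only by
  permutations of argument lists. -/
  inductive IsoT : Rt → Rt → Prop
    | var (x : ℕ) : IsoT (.var x) (.var x)
    | lam {a a'} : IsoT a a' → IsoT (.lam a) (.lam a')
    | inl {a a'} : IsoT a a' → IsoT (.inl a) (.inl a')
    | inr {a a'} : IsoT a a' → IsoT (.inr a) (.inr a')
    | app {c c' : Rt} {ds ds' : List Rt} :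
        IsoT c c' → IsoM ds ds' → IsoT (.app c ds) (.app c' ds')
  /-- Isomorphism of rigid monomials: a permutation `σ` together with
  isomorphisms `aᵢ ≅ a'_{σ(i)}`. -/
  inductive IsoM : List Rt → List Rt → Prop
    | mk (as as' : List Rt) (h : as'.length = as.length) (σ : Equiv.Perm (Fin as.length))
        (H : ∀ i : Fin as.length, IsoT (as.get i) (as'.get ((σ i).cast h.symm))) :
        IsoM as as'
end

/-! ### Coherence -/

mutual
  /-- Coherence on rigid resource terms. -/
  inductive CohT : Rt → Rt → Prop
    | var (x : ℕ) : CohT (.var x) (.var x)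
    | lam {a a'} : CohT a a' → CohT (.lam a) (.lam a')
    | app {c c' : Rt} {ds ds' : List Rt} :
        CohT c c' → CohM ds ds' → CohT (.app c ds) (.app c' ds')
    | inl {a a'} : CohT a a' → CohT (.inl a) (.inl a')
    | inr {a a'} : CohT a a' → CohT (.inr a) (.inr a')
    | mix (a a' : Rt) : CohT (.inl a) (.inr a')
  /-- Coherence on rigid monomials: all elements pairwise coherent. -/
  inductive CohM : List Rt → List Rt → Prop
    | mk {ds ds' : List Rt} (H : ∀ b ∈ ds ++ ds', ∀ b' ∈ ds ++ ds', CohT b b') :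
        CohM ds ds'
end

/-- Coherence on rigid expressions. -/
def CohE : REx → REx → Prop
  | .inl a, .inl a' => CohT a a'
  | .inr l, .inr l' => CohM l l'
  | _, _ => False

/-! ### Occurrence counting and rigid substitution -/

namespace Rt

/-- Shift free de Bruijn indices `≥ c` up by one in a rigid term. -/
def shiftR (c : ℕ) : Rt → Rt
  | .var n => .var (if n < c then n else n + 1)
  | .lam a => .lam (a.shiftR (c + 1))
  | .inl a => .inl (a.shiftR c)
  | .inr a => .inr (a.shiftR c)
  | .app d es => .app (d.shiftR c) (es.attach.map fun e => e.1.shiftR c)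
termination_by r => sizeOf r
decreasing_by
  all_goals simp_wf
  all_goals try omega
  all_goals (have := List.sizeOf_lt_of_mem e.2; omega)

end Rt

/-- Number of free occurrences `n_x(a)` of the variable `x` in a rigid term. -/
def nx (x : ℕ) : Rt → ℕ
  | .var n => if n = x then 1 else 0
  | .lam a => nx (x + 1) a
  | .inl a => nx x a
  | .inr a => nx x a
  | .app d es => nx x d + (es.attach.map fun e => nx x e.1).sum
termination_by r => sizeOf r
decreasing_by
  all_goals simp_wf
  all_goals try omega
  all_goals (have := List.sizeOf_lt_of_mem e.2; omega)

/-- Number of free occurrences of `x` in a rigid monomial. -/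
def nxL (x : ℕ) (l : List Rt) : ℕ := (l.map (nx x)).sum

/-- Number of free occurrences of `x` in a rigid expression. -/
def nxE (x : ℕ) : REx → ℕ := Sum.elim (nx x) (nxL x)

mutual
  /-- Rigid substitution `r[b⃗/x]`: the occurrences of `x` in `r`, taken from
  left to right, are replaced by the successive elements of `b⃗`; it is
  undefined (`none`, i.e. the partial rigid expression `0`) unless `n_x(r) = |b⃗|`. -/
  def rsubst : Rt → ℕ → List Rt → Option Rt
    | .var n, x, bs =>
        if n = x then (match bs with | [b] => some b | _ => none)
        else (match bs with
              | [] => some (.var (if x < n then n - 1 else n))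
              | _ => none)
    | .lam a, x, bs => (rsubst a (x + 1) (bs.map (Rt.shiftR 0))).map .lam
    | .inl a, x, bs => (rsubst a x bs).map .inl
    | .inr a, x, bs => (rsubst a x bs).map .inr
    | .app c ds, x, bs =>
        match rsubst c x (bs.take (nx x c)), rsubstL ds x (bs.drop (nx x c)) with
        | some c', some ds' => some (.app c' ds')
        | _, _ => none
  /-- Rigid substitution in a rigid monomial. -/
  def rsubstL : List Rt → ℕ → List Rt → Option (List Rt)
    | [], _, bs => (match bs with | [] => some [] | _ => none)
    | a :: as, x, bs =>
        match rsubst a x (bs.take (nx x a)), rsubstL as x (bs.drop (nx x a)) with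
        | some a', some as' => some (a' :: as')
        | _, _ => none
end

/-- Rigid substitution on rigid expressions. -/
def rsubstE : REx → ℕ → List Rt → Option REx
  | .inl r, x, bs => (rsubst r x bs).map .inl
  | .inr l, x, bs => (rsubstL l x bs).map .inr

/-- Left action of a permutation on a list:
`σ·(b₁,…,bₙ) = (b_{σ⁻¹(1)},…,b_{σ⁻¹(n)})` (identity if the length is not `n`). -/
def permList {α : Type*} {n : ℕ} (σ : Equiv.Perm (Fin n)) (l : List α) : List α :=
  if h : l.length = n then List.ofFn (fun j : Fin n => l.get ((σ.symm j).cast h.symm))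
  else l


/-- Isomorphism of rigid expressions. -/
def IsoE : REx → REx → Prop
  | .inl a, .inl a' => IsoT a a'
  | .inr l, .inr l' => IsoM l l'
  | _, _ => False


/-! ### Auxiliary development -/

section Aux
open List

/-- equation lemmas -/
theorem shiftR_var (c n : ℕ) : Rt.shiftR c (.var n) = .var (if n < c then n else n + 1) := by
  rw [Rt.shiftR]
theorem shiftR_lam (c : ℕ) (a : Rt) : Rt.shiftR c (.lam a) = .lam (a.shiftR (c+1)) := by
  rw [Rt.shiftR]
theorem shiftR_inl (c : ℕ) (a : Rt) : Rt.shiftR c (.inl a) = .inl (a.shiftR c) := by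
  rw [Rt.shiftR]
theorem shiftR_inr (c : ℕ) (a : Rt) : Rt.shiftR c (.inr a) = .inr (a.shiftR c) := by
  rw [Rt.shiftR]
theorem shiftR_app (c : ℕ) (d : Rt) (es : List Rt) :
    Rt.shiftR c (.app d es) = .app (d.shiftR c) (es.map (Rt.shiftR c)) := by
  rw [Rt.shiftR]; simp

theorem nx_app (x : ℕ) (d : Rt) (es : List Rt) :
    nx x (.app d es) = nx x d + (es.map (nx x)).sum := by
  rw [nx]; simp

/-- unshift: inverse of shiftR -/
def unshift (c : ℕ) : Rt → Rt
  | .var n => .var (if n < c then n else n - 1)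
  | .lam a => .lam (unshift (c + 1) a)
  | .inl a => .inl (unshift c a)
  | .inr a => .inr (unshift c a)
  | .app d es => .app (unshift c d) (es.attach.map fun e => unshift c e.1)
termination_by r => sizeOf r
decreasing_by
  all_goals simp_wf
  all_goals try omega
  all_goals (have := List.sizeOf_lt_of_mem e.2; omega)

theorem unshift_app (c : ℕ) (d : Rt) (es : List Rt) :
    unshift c (.app d es) = .app (unshift c d) (es.map (unshift c)) := by
  rw [unshift]; simp

mutual
theorem unshift_shift (a : Rt) (c : ℕ) : unshift c (a.shiftR c) = a := by
  cases a with
  | var n =>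
      rw [shiftR_var, unshift]
      split_ifs with h1 h2 <;> simp_all <;> omega
  | lam a => rw [shiftR_lam, unshift, unshift_shift a (c+1)]
  | inl a => rw [shiftR_inl, unshift, unshift_shift a c]
  | inr a => rw [shiftR_inr, unshift, unshift_shift a c]
  | app d es =>
      rw [shiftR_app, unshift_app, unshift_shift d c, unshift_shift_list es c]
termination_by sizeOf a
theorem unshift_shift_list (es : List Rt) (c : ℕ) :
    (es.map (Rt.shiftR c)).map (unshift c) = es := by
  cases es with
  | nil => rfl
  | cons e t => simp only [List.map_cons, unshift_shift e c, unshift_shift_list t c]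
termination_by sizeOf es
end

theorem unshift_var (c n : ℕ) : unshift c (.var n) = .var (if n < c then n else n - 1) := by
  rw [unshift]
theorem unshift_lam (c : ℕ) (a : Rt) : unshift c (.lam a) = .lam (unshift (c+1) a) := by
  rw [unshift]
theorem unshift_inl (c : ℕ) (a : Rt) : unshift c (.inl a) = .inl (unshift c a) := by
  rw [unshift]
theorem unshift_inr (c : ℕ) (a : Rt) : unshift c (.inr a) = .inr (unshift c a) := by
  rw [unshift]

mutual
theorem isoT_unshift (a a' : Rt) (h : IsoT a a') (c : ℕ) :
    IsoT (unshift c a) (unshift c a') := by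
  cases h with
  | var n => rw [unshift_var]; exact .var _
  | lam h => rw [unshift_lam, unshift_lam]; exact .lam (isoT_unshift _ _ h (c+1))
  | inl h => rw [unshift_inl, unshift_inl]; exact .inl (isoT_unshift _ _ h c)
  | inr h => rw [unshift_inr, unshift_inr]; exact .inr (isoT_unshift _ _ h c)
  | @app d d' es es' h hm =>
      rw [unshift_app, unshift_app]
      exact .app (isoT_unshift _ _ h c) (isoM_unshift _ _ hm c)
termination_by sizeOf a
theorem isoM_unshift (l l' : List Rt) (h : IsoM l l') (c : ℕ) :
    IsoM (l.map (unshift c)) (l'.map (unshift c))  := by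
  cases h with
  | mk _ _ hl σ H =>
      refine .mk _ _ (by simpa using hl)
        ((finCongr (by simp : (l.map (unshift c)).length = l.length)).trans
          (σ.trans (finCongr (by simp)))) (fun i => ?_)
      have hlt : sizeOf (l.get (i.cast (by simp))) < sizeOf l :=
        List.sizeOf_lt_of_mem (List.get_mem l _)
      have := isoT_unshift _ _ (H (i.cast (by simp))) c
      simp only [List.get_eq_getElem, List.getElem_map, Equiv.trans_apply, finCongr_apply]
      convert this using 3 <;> simp [Fin.ext_iff]
termination_by sizeOf l
end

theorem isoT_of_shift {a a' : Rt} {c : ℕ} (h : IsoT (a.shiftR c) (a'.shiftR c)) : IsoT a a' := by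
  have := isoT_unshift _ _ h c
  rwa [unshift_shift, unshift_shift] at this

theorem isoM_of_map_shift {l l' : List Rt} {c : ℕ}
    (h : IsoM (l.map (Rt.shiftR c)) (l'.map (Rt.shiftR c))) : IsoM l l' := by
  have := isoM_unshift _ _ h c
  rwa [unshift_shift_list, unshift_shift_list] at this

theorem perm_exists {α : Type*} {l₁ l₂ : List α} (p : l₁.Perm l₂) :
    ∃ (h : l₂.length = l₁.length) (σ : Equiv.Perm (Fin l₁.length)),
      ∀ i : Fin l₁.length, l₁.get i = l₂.get ((σ i).cast h.symm) := by
  induction p with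
  | nil => exact ⟨rfl, 1, fun i => i.elim0⟩
  | @cons x t₁ t₂ p ih =>
      obtain ⟨h, σ, H⟩ := ih
      refine ⟨by simp [h], Equiv.Perm.decomposeFin.symm (0, σ), fun i => ?_⟩
      refine Fin.cases ?_ (fun j => ?_) i
      · simp [Equiv.Perm.decomposeFin_symm_apply_zero, List.get_eq_getElem]
      · have := H j
        simp only [Equiv.Perm.decomposeFin_symm_apply_succ, Equiv.swap_self,
          Equiv.refl_apply, List.get_eq_getElem, Fin.coe_cast, Fin.val_succ] at this ⊢
        simpa using this
  | swap x y t =>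
      refine ⟨rfl, Equiv.swap ⟨0, by simp⟩ ⟨1, by simp⟩, fun i => ?_⟩
      rcases i with ⟨(_|_|k), hi⟩
      · rw [show (Equiv.swap (⟨0, by simp⟩ : Fin (y::x::t).length) ⟨1, by simp⟩) ⟨0, hi⟩
            = ⟨1, by simp⟩ from Equiv.swap_apply_left _ _]
        rfl
      · rw [show (Equiv.swap (⟨0, by simp⟩ : Fin (y::x::t).length) ⟨1, by simp⟩) ⟨1, hi⟩
            = ⟨0, by simp⟩ from Equiv.swap_apply_right _ _]
        rfl
      · rw [Equiv.swap_apply_of_ne_of_ne (by simp [Fin.ext_iff]) (by simp [Fin.ext_iff])]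
        rfl
  | @trans t₁ t₂ t₃ p₁ p₂ ih₁ ih₂ =>
      obtain ⟨h₁, σ₁, H₁⟩ := ih₁
      obtain ⟨h₂, σ₂, H₂⟩ := ih₂
      refine ⟨h₂.trans h₁, σ₁.trans ((finCongr h₁.symm).trans (σ₂.trans (finCongr h₁))),
        fun i => ?_⟩
      rw [H₁ i]
      have := H₂ ((σ₁ i).cast h₁.symm)
      simp only [List.get_eq_getElem, Fin.coe_cast, Equiv.trans_apply, finCongr_apply] at this ⊢
      simpa using this

theorem perm_flatten {α : Type*} {L₁ L₂ : List (List α)} (h : L₁.Perm L₂) :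
    L₁.flatten.Perm L₂.flatten := by
  induction h with
  | nil => rfl
  | cons x _ ih => simpa using ih.append_left x
  | swap x y l => simp [← List.append_assoc]; exact (List.perm_append_comm.append_right _)
  | trans _ _ ih1 ih2 => exact ih1.trans ih2

theorem isoM_of_forall₂_perm {as l as' : List Rt}
    (h1 : List.Forall₂ IsoT as l) (h2 : l.Perm as') : IsoM as as' := by
  obtain ⟨h, σ, H⟩ := perm_exists h2
  have hlen : as.length = l.length := h1.length_eq
  refine .mk _ _ (by rw [h, hlen]) ((finCongr hlen).trans (σ.trans (finCongr hlen.symm)))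
    (fun i => ?_)
  have g1 : IsoT (as.get i) (l.get (i.cast hlen)) := by
    have := (List.forall₂_iff_get.mp h1).2 i.val i.isLt (by simpa [← hlen] using i.isLt)
    simpa using this
  rw [H (i.cast hlen)] at g1
  convert g1 using 2
  all_goals simp [Fin.ext_iff]

theorem isoM_forall₂_perm {as as' : List Rt} (h : IsoM as as') :
    ∃ l, List.Forall₂ IsoT as l ∧ l.Perm as' := by
  cases h with
  | mk _ _ hl σ H =>
    refine ⟨List.ofFn (fun i : Fin as.length => as'.get ((σ i).cast hl.symm)), ?_, ?_⟩
    · rw [List.forall₂_iff_get]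
      refine ⟨by simp, fun i h₁ h₂ => ?_⟩
      have := H ⟨i, h₁⟩
      simp only [List.get_eq_getElem, List.getElem_ofFn]
      convert this using 2 <;> simp [Fin.ext_iff]
    · have he : (fun i : Fin as.length => as'.get ((σ i).cast hl.symm))
          = (fun j : Fin as.length => as'.get (j.cast hl.symm)) ∘ σ := rfl
      rw [he]
      refine (Equiv.Perm.ofFn_comp_perm σ _).trans ?_
      have : List.ofFn (fun j : Fin as.length => as'.get (j.cast hl.symm)) = as' := by
        apply List.ext_getElem (by simp [hl])
        intro n h₁ h₂; simp
      rw [this]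

theorem isoM_nil : IsoM [] [] := isoM_of_forall₂_perm .nil (List.Perm.refl _)

theorem isoM_singleton {b b' : Rt} (h : IsoT b b') : IsoM [b] [b'] :=
  isoM_of_forall₂_perm (.cons h .nil) (List.Perm.refl _)

theorem isoM_append {l₁ l₂ l₃ l₄ : List Rt} (h1 : IsoM l₁ l₂) (h2 : IsoM l₃ l₄) :
    IsoM (l₁ ++ l₃) (l₂ ++ l₄) := by
  obtain ⟨m1, f1, p1⟩ := isoM_forall₂_perm h1
  obtain ⟨m2, f2, p2⟩ := isoM_forall₂_perm h2
  exact isoM_of_forall₂_perm (List.rel_append f1 f2) (p1.append p2)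

theorem isoM_flatten {n : ℕ} (Cs Cs' : List (List Rt)) (hn : Cs.length = n) (hn' : Cs'.length = n)
    (σ : Equiv.Perm (Fin n))
    (H : ∀ i : Fin n, IsoM (Cs.get (i.cast hn.symm)) (Cs'.get ((σ i).cast hn'.symm))) :
    IsoM Cs.flatten Cs'.flatten := by
  choose L hF hP using fun i => isoM_forall₂_perm (H i)
  have h1 : List.Forall₂ (List.Forall₂ IsoT) Cs (List.ofFn L) := by
    rw [List.forall₂_iff_get]
    refine ⟨by simp [hn], fun i h₁ h₂ => ?_⟩
    have := hF ⟨i, by simpa [hn] using h₁⟩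
    simp only [List.get_eq_getElem, List.getElem_ofFn]
    convert this using 2 <;> simp [Fin.ext_iff]
  have h2 : List.Forall₂ (· ~ ·) (List.ofFn L) (List.ofFn (fun i => Cs'.get ((σ i).cast hn'.symm))) := by
    rw [List.forall₂_iff_get]
    refine ⟨by simp, fun i h₁ h₂ => ?_⟩
    have := hP ⟨i, by simpa using h₁⟩
    simp only [List.get_eq_getElem, List.getElem_ofFn]
    convert this using 2 <;> simp [Fin.ext_iff]
  have h3 : (List.ofFn (fun i : Fin n => Cs'.get ((σ i).cast hn'.symm))).Perm Cs' := by
    have he : (fun i : Fin n => Cs'.get ((σ i).cast hn'.symm))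
        = (fun j : Fin n => Cs'.get (j.cast hn'.symm)) ∘ σ := rfl
    rw [he]
    refine (Equiv.Perm.ofFn_comp_perm σ _).trans ?_
    have : List.ofFn (fun j : Fin n => Cs'.get (j.cast hn'.symm)) = Cs' := by
      apply List.ext_getElem (by simp [hn'])
      intro m h₁ h₂; simp
    rw [this]
  exact isoM_of_forall₂_perm (List.rel_flatten h1)
    ((List.Perm.flatten_congr h2).trans (perm_flatten h3))

theorem rsubst_var_eq (x n : ℕ) (bs : List Rt) (u : Rt) (h : rsubst (.var n) x bs = some u) :
    (n = x ∧ bs = [u]) ∨ (n ≠ x ∧ bs = [] ∧ u = .var (if x < n then n - 1 else n)) := by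
  by_cases hx : n = x
  · left
    refine ⟨hx, ?_⟩
    rcases bs with _ | ⟨b, _ | ⟨c, t⟩⟩ <;> simp [rsubst, hx] at h <;> simp [h]
  · right
    refine ⟨hx, ?_⟩
    rcases bs with _ | ⟨b, t⟩ <;> simp [rsubst, hx] at h
    exact ⟨rfl, h.symm⟩

theorem rsubst_lam_eq (x : ℕ) (a : Rt) (bs : List Rt) (u : Rt)
    (h : rsubst (.lam a) x bs = some u) :
    ∃ u₀, rsubst a (x+1) (bs.map (Rt.shiftR 0)) = some u₀ ∧ u = .lam u₀ := by
  rw [rsubst] at h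
  obtain ⟨u₀, h₀, he⟩ := Option.map_eq_some_iff.mp h
  exact ⟨u₀, h₀, he.symm⟩

theorem rsubst_inl_eq (x : ℕ) (a : Rt) (bs : List Rt) (u : Rt)
    (h : rsubst (.inl a) x bs = some u) :
    ∃ u₀, rsubst a x bs = some u₀ ∧ u = .inl u₀ := by
  rw [rsubst] at h
  obtain ⟨u₀, h₀, he⟩ := Option.map_eq_some_iff.mp h
  exact ⟨u₀, h₀, he.symm⟩

theorem rsubst_inr_eq (x : ℕ) (a : Rt) (bs : List Rt) (u : Rt)
    (h : rsubst (.inr a) x bs = some u) :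
    ∃ u₀, rsubst a x bs = some u₀ ∧ u = .inr u₀ := by
  rw [rsubst] at h
  obtain ⟨u₀, h₀, he⟩ := Option.map_eq_some_iff.mp h
  exact ⟨u₀, h₀, he.symm⟩

theorem rsubst_app_eq (x : ℕ) (c : Rt) (ds bs : List Rt) (u : Rt)
    (h : rsubst (.app c ds) x bs = some u) :
    ∃ c₁ ds₁, rsubst c x (bs.take (nx x c)) = some c₁ ∧
      rsubstL ds x (bs.drop (nx x c)) = some ds₁ ∧ u = .app c₁ ds₁ := by
  rw [rsubst] at h
  rcases h1 : rsubst c x (bs.take (nx x c)) with _ | c₁ <;>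
    rcases h2 : rsubstL ds x (bs.drop (nx x c)) with _ | ds₁ <;>
    rw [h1, h2] at h <;> simp only [] at h
  · exact absurd h (by simp)
  · exact absurd h (by simp)
  · exact absurd h (by simp)
  · exact ⟨c₁, ds₁, rfl, rfl, by simpa using h.symm⟩

theorem rsubstL_nil_eq (x : ℕ) (bs us : List Rt) (h : rsubstL [] x bs = some us) :
    bs = [] ∧ us = [] := by
  rcases bs with _ | ⟨b, t⟩ <;> simp [rsubstL] at h
  exact ⟨rfl, h⟩

theorem rsubstL_cons_eq (x : ℕ) (a : Rt) (ts bs us : List Rt)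
    (h : rsubstL (a :: ts) x bs = some us) :
    ∃ u₀ us₀, rsubst a x (bs.take (nx x a)) = some u₀ ∧
      rsubstL ts x (bs.drop (nx x a)) = some us₀ ∧ us = u₀ :: us₀ := by
  rw [rsubstL] at h
  rcases h1 : rsubst a x (bs.take (nx x a)) with _ | u₀ <;>
    rcases h2 : rsubstL ts x (bs.drop (nx x a)) with _ | us₀ <;>
    rw [h1, h2] at h <;> simp only [] at h
  · exact absurd h (by simp)
  · exact absurd h (by simp)
  · exact absurd h (by simp)
  · exact ⟨u₀, us₀, rfl, rfl, by simpa using h.symm⟩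

mutual
theorem rsubst_len (a : Rt) (x : ℕ) (bs : List Rt) (u : Rt) (h : rsubst a x bs = some u) :
    bs.length = nx x a := by
  cases a with
  | var n =>
      rcases rsubst_var_eq x n bs u h with ⟨he, hb⟩ | ⟨hne, hb, _⟩ <;> subst hb <;> rw [nx]
      · simp [he]
      · simp [hne]
  | lam a =>
      obtain ⟨u₀, h₀, _⟩ := rsubst_lam_eq x a bs u h
      have := rsubst_len a (x+1) (bs.map (Rt.shiftR 0)) u₀ h₀
      rw [nx]; simpa using this
  | inl a =>
      obtain ⟨u₀, h₀, _⟩ := rsubst_inl_eq x a bs u h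
      have := rsubst_len a x bs u₀ h₀
      rw [nx]; exact this
  | inr a =>
      obtain ⟨u₀, h₀, _⟩ := rsubst_inr_eq x a bs u h
      have := rsubst_len a x bs u₀ h₀
      rw [nx]; exact this
  | app c ds =>
      obtain ⟨c₁, ds₁, h1, h2, _⟩ := rsubst_app_eq x c ds bs u h
      have e1 := rsubst_len c x (bs.take (nx x c)) c₁ h1
      have e2 := rsubstL_len ds x (bs.drop (nx x c)) ds₁ h2
      rw [nx_app]
      rw [List.length_take] at e1
      rw [List.length_drop] at e2
      rw [nxL] at e2
      omega
termination_by sizeOf a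
theorem rsubstL_len (ds : List Rt) (x : ℕ) (bs us : List Rt) (h : rsubstL ds x bs = some us) :
    bs.length = nxL x ds := by
  cases ds with
  | nil =>
      obtain ⟨hb, _⟩ := rsubstL_nil_eq x bs us h
      simp [hb, nxL]
  | cons a ts =>
      obtain ⟨u₀, us₀, h1, h2, _⟩ := rsubstL_cons_eq x a ts bs us h
      have e1 := rsubst_len a x (bs.take (nx x a)) u₀ h1
      have e2 := rsubstL_len ts x (bs.drop (nx x a)) us₀ h2
      rw [List.length_take] at e1
      rw [List.length_drop] at e2
      simp only [nxL, List.map_cons, List.sum_cons] at e2 ⊢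
      omega
termination_by sizeOf ds
end

/-- the decomposition of the substituend into chunks -/
def chunks (x : ℕ) : List Rt → List Rt → List (List Rt)
  | [], _ => []
  | a :: as, bs => bs.take (nx x a) :: chunks x as (bs.drop (nx x a))

theorem chunks_length (x : ℕ) : ∀ (ds bs : List Rt), (chunks x ds bs).length = ds.length
  | [], _ => rfl
  | _ :: as, bs => by simp [chunks, chunks_length x as]

theorem rsubstL_spec (ds : List Rt) (x : ℕ) : ∀ (bs us : List Rt),
    rsubstL ds x bs = some us →
    (chunks x ds bs).flatten = bs ∧ us.length = ds.length ∧
    ∀ (i : ℕ) (h1 : i < ds.length) (h2 : i < (chunks x ds bs).length) (h3 : i < us.length),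
      rsubst (ds.get ⟨i, h1⟩) x ((chunks x ds bs).get ⟨i, h2⟩) = some (us.get ⟨i, h3⟩) := by
  induction ds with
  | nil =>
      intro bs us h
      obtain ⟨hb, hu⟩ := rsubstL_nil_eq x bs us h
      subst hb; subst hu
      exact ⟨rfl, rfl, fun i h1 => by simp at h1⟩
  | cons a ts ih =>
      intro bs us h
      obtain ⟨u₀, us₀, h1, h2, hu⟩ := rsubstL_cons_eq x a ts bs us h
      subst hu
      obtain ⟨ihf, ihl, ihg⟩ := ih (bs.drop (nx x a)) us₀ h2
      refine ⟨?_, by simpa using ihl, ?_⟩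
      · simp only [chunks, List.flatten_cons, ihf, List.take_append_drop]
      · intro i hd1 hd2 hd3
        match i with
        | 0 => simpa [chunks] using h1
        | (j+1) =>
            have hts : j < ts.length := by simp at hd1; omega
            have hc2 : j < (chunks x ts (bs.drop (nx x a))).length := by
              rw [chunks_length]; exact hts
            have hu3 : j < us₀.length := by rw [ihl]; exact hts
            have := ihg j hts hc2 hu3
            simpa [chunks, List.get_eq_getElem, List.getElem_cons_succ] using this

mutual
theorem mainT (a a' : Rt) (x : ℕ) (bs bs' : List Rt) (u u' : Rt)
    (hcoh : CohT a a')
    (hu : rsubst a x bs = some u) (hu' : rsubst a' x bs' = some u')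
    (hiso : IsoT u u') : IsoT a a' ∧ IsoM bs bs' := by
  cases hcoh with
  | var n =>
      rcases rsubst_var_eq x n bs u hu with ⟨he, hb⟩ | ⟨hne, hb, hv⟩ <;>
        rcases rsubst_var_eq x n bs' u' hu' with ⟨he', hb'⟩ | ⟨hne', hb', hv'⟩
      · subst hb; subst hb'; exact ⟨.var n, isoM_singleton hiso⟩
      · exact absurd he hne'
      · exact absurd he' hne
      · subst hb; subst hb'; exact ⟨.var n, isoM_nil⟩
  | @lam a₀ a₀' h0 =>
      obtain ⟨u₀, h₀, hu0⟩ := rsubst_lam_eq _ _ _ _ hu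
      obtain ⟨u₀', h₀', hu0'⟩ := rsubst_lam_eq _ _ _ _ hu'
      subst hu0; subst hu0'
      cases hiso with
      | lam hiso0 =>
          obtain ⟨ih1, ih2⟩ := mainT a₀ a₀' (x+1) _ _ _ _ h0 h₀ h₀' hiso0
          exact ⟨.lam ih1, isoM_of_map_shift ih2⟩
  | @inl a₀ a₀' h0 =>
      obtain ⟨u₀, h₀, hu0⟩ := rsubst_inl_eq _ _ _ _ hu
      obtain ⟨u₀', h₀', hu0'⟩ := rsubst_inl_eq _ _ _ _ hu'
      subst hu0; subst hu0'
      cases hiso with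
      | inl hiso0 =>
          obtain ⟨ih1, ih2⟩ := mainT a₀ a₀' x _ _ _ _ h0 h₀ h₀' hiso0
          exact ⟨.inl ih1, ih2⟩
  | @inr a₀ a₀' h0 =>
      obtain ⟨u₀, h₀, hu0⟩ := rsubst_inr_eq _ _ _ _ hu
      obtain ⟨u₀', h₀', hu0'⟩ := rsubst_inr_eq _ _ _ _ hu'
      subst hu0; subst hu0'
      cases hiso with
      | inr hiso0 =>
          obtain ⟨ih1, ih2⟩ := mainT a₀ a₀' x _ _ _ _ h0 h₀ h₀' hiso0
          exact ⟨.inr ih1, ih2⟩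
  | mix a₀ a₀' =>
      obtain ⟨u₀, h₀, hu0⟩ := rsubst_inl_eq _ _ _ _ hu
      obtain ⟨u₀', h₀', hu0'⟩ := rsubst_inr_eq _ _ _ _ hu'
      subst hu0; subst hu0'
      cases hiso
  | @app c c' ds ds' hc hds =>
      obtain ⟨c₁, ds₁, h1, h2, he⟩ := rsubst_app_eq _ _ _ _ _ hu
      obtain ⟨c₁', ds₁', h1', h2', he'⟩ := rsubst_app_eq _ _ _ _ _ hu'
      subst he; subst he'
      cases hiso with
      | app hic him =>
          obtain ⟨ihc1, ihc2⟩ := mainT c c' x _ _ _ _ hc h1 h1' hic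
          obtain ⟨ihd1, ihd2⟩ := mainL ds ds' x _ _ _ _ hds h2 h2' him
          refine ⟨.app ihc1 ihd1, ?_⟩
          have := isoM_append ihc2 ihd2
          rwa [List.take_append_drop, List.take_append_drop] at this
termination_by sizeOf a

theorem mainL (ds ds' : List Rt) (x : ℕ) (bs bs' us us' : List Rt)
    (hcoh : CohM ds ds')
    (hu : rsubstL ds x bs = some us) (hu' : rsubstL ds' x bs' = some us')
    (hiso : IsoM us us') : IsoM ds ds' ∧ IsoM bs bs' := by
  obtain ⟨hflat, hlen, hget⟩ := rsubstL_spec ds x bs us hu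
  obtain ⟨hflat', hlen', hget'⟩ := rsubstL_spec ds' x bs' us' hu'
  cases hcoh with
  | mk Hp =>
  cases hiso with
  | mk _ _ hl σ H =>
      have hcl : (chunks x ds bs).length = ds.length := chunks_length x ds bs
      have hcl' : (chunks x ds' bs').length = ds'.length := chunks_length x ds' bs'
      have key : ∀ i : Fin us.length,
          IsoT (ds.get ⟨i.1, by have := i.isLt; omega⟩)
               (ds'.get ⟨(σ i).1, by have := (σ i).isLt; omega⟩) ∧
          IsoM ((chunks x ds bs).get ⟨i.1, by have := i.isLt; omega⟩)
               ((chunks x ds' bs').get ⟨(σ i).1, by have := (σ i).isLt; omega⟩) := by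
        intro i
        have hi1 : i.1 < ds.length := by have := i.isLt; omega
        have hj1 : (σ i).1 < ds'.length := by have := (σ i).isLt; omega
        have g1 := hget i.1 hi1 (by omega) i.isLt
        have g1' := hget' (σ i).1 hj1 (by omega) (by have := (σ i).isLt; omega)
        have hco : CohT (ds.get ⟨i.1, hi1⟩) (ds'.get ⟨(σ i).1, hj1⟩) :=
          Hp _ (List.mem_append.mpr (Or.inl (List.get_mem _ _)))
             _ (List.mem_append.mpr (Or.inr (List.get_mem _ _)))
        have hlt : sizeOf (ds.get ⟨i.1, hi1⟩) < sizeOf ds :=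
          List.sizeOf_lt_of_mem (List.get_mem _ _)
        have hiso0 : IsoT (us.get ⟨i.1, i.isLt⟩)
            (us'.get ⟨(σ i).1, by have := (σ i).isLt; omega⟩) := H i
        exact mainT _ _ x _ _ _ _ hco g1 g1' hiso0
      constructor
      · refine .mk ds ds' (by omega)
          ((finCongr hlen.symm).trans (σ.trans (finCongr hlen))) (fun i => ?_)
        exact (key (i.cast hlen.symm)).1
      · rw [← hflat, ← hflat']
        refine isoM_flatten (n := us.length) _ _ (by rw [hcl, ← hlen])
          (by rw [hcl', ← hlen', hl]) σ (fun i => ?_)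
        exact (key i).2
termination_by sizeOf ds
end
/-! ### STATEMENT 15:
Let `r, r'` be coherent rigid resource expressions and `b⃗, b⃗'` rigid monomials
with `|b⃗| = n_x(r)` and `|b⃗'| = n_x(r')`. If `r[b⃗/x] ≅ r'[b⃗'/x]` then `r ≅ r'`
and `b⃗ ≅ b⃗'`. -/
theorem subst_iso_of_coherent (x : ℕ) (r r' : REx) (bs bs' : List Rt)
    (hcoh : CohE r r')
    (hl : bs.length = nxE x r) (hl' : bs'.length = nxE x r')
    (u u' : REx) (hu : rsubstE r x bs = some u) (hu' : rsubstE r' x bs' = some u')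
    (hiso : IsoE u u') :
    IsoE r r' ∧ IsoM bs bs' := by
  cases r with
  | inl a =>
      cases r' with
      | inl a' =>
          simp only [rsubstE] at hu hu'
          obtain ⟨u₀, h₀, he⟩ := Option.map_eq_some_iff.mp hu
          obtain ⟨u₀', h₀', he'⟩ := Option.map_eq_some_iff.mp hu'
          subst he; subst he'
          have hiso0 : IsoT u₀ u₀' := hiso
          have hcoh0 : CohT a a' := hcoh
          obtain ⟨g1, g2⟩ := mainT a a' x bs bs' u₀ u₀' hcoh0 h₀ h₀' hiso0
          exact ⟨g1, g2⟩
      | inr l' => exact hcoh.elim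
  | inr l =>
      cases r' with
      | inl a' => exact hcoh.elim
      | inr l' =>
          simp only [rsubstE] at hu hu'
          obtain ⟨u₀, h₀, he⟩ := Option.map_eq_some_iff.mp hu
          obtain ⟨u₀', h₀', he'⟩ := Option.map_eq_some_iff.mp hu'
          subst he; subst he'
          have hiso0 : IsoM u₀ u₀' := hiso
          have hcoh0 : CohM l l' := hcoh
          obtain ⟨g1, g2⟩ := mainL l l' x bs bs' u₀ u₀' hcoh0 h₀ h₀' hiso0
          exact ⟨g1, g2⟩
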